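/- arXiv:2103.09875 — 4 statements merged into one kernel-verified Lean document; each statement's English description precedes it below -/
import Mathlib

section
/- Let J be a closed interval or a circle, and let γ : J → ℝⁿ, n ≥ 4, be an injective continuous map of bounded variation. Let P : ℝⁿ → ℝⁿ⁻¹ be the projection onto the last n−1 coordinates. Then for every ε > 0 there exists a linear map T : ℝⁿ → ℝⁿ⁻¹ with operator norm ‖T − P‖ < ε such that T ∘ γ is injective. -/
/-!
Reparametrizing `γ` by arc length makes its image `K` a `1`-Lipschitz image of a subset of `ℝ`,
so the difference set `K - K` has Hausdorff dimension at most `2`. Perturb `P` to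
`T = P + π(·) v`, where `π` is the first coordinate. If `T x = T y` with `x ≠ y`, then
`z = x - y ∈ K - K` has `π z ≠ 0` (since `ker P ∩ ker π = 0`) and `v = -(π z)⁻¹ P z`. These bad
directions form a locally Lipschitz image of `K - K`, of dimension `≤ 2 < n - 1`, so they
have dense complement in `ℝⁿ⁻¹`, and we can pick an arbitrarily small good `v`.
-/

open Set Module
open scoped Pointwise

section ConstantSpeed

variable {E : Type*}

theorem HasConstantSpeedOnWith.lipschitzOnWith [PseudoEMetricSpace E] {f : ℝ → E} {s : Set ℝ}
    {l : NNReal} (h : HasConstantSpeedOnWith f s l) : LipschitzOnWith l f s := by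
  intro x hx y hy
  wlog hxy : x ≤ y generalizing x y
  · rw [edist_comm, edist_comm x]
    exact this hy hx (le_of_not_ge hxy)
  calc edist (f x) (f y) ≤ eVariationOn f (s ∩ Icc x y) :=
        eVariationOn.edist_le f ⟨hx, le_rfl, hxy⟩ ⟨hy, hxy, le_rfl⟩
    _ = l * edist x y := by
        rw [hasConstantSpeedOnWith_iff_ordered.1 h hx hy hxy, ENNReal.ofReal_mul l.coe_nonneg,
          ENNReal.ofReal_coe_nnreal, edist_comm, edist_dist, Real.dist_eq,
          abs_of_nonneg (sub_nonneg.2 hxy)]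

variable {α : Type*} [LinearOrder α] {f : α → E} {s : Set α} {a : α}

theorem lipschitzOnWith_naturalParameterization [PseudoEMetricSpace E]
    (hf : LocallyBoundedVariationOn f s) (ha : a ∈ s) :
    LipschitzOnWith 1 (naturalParameterization f s a) (variationOnFromTo f s a '' s) :=
  (has_unit_speed_naturalParameterization f hf ha).lipschitzOnWith

theorem image_naturalParameterization [EMetricSpace E] (hf : LocallyBoundedVariationOn f s)
    (ha : a ∈ s) : naturalParameterization f s a '' (variationOnFromTo f s a '' s) = f '' s := by
  rw [image_image]
  exact EqOn.image_eq fun b hb => edist_eq_zero.1 (edist_naturalParameterization_eq_zero hf ha hb)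

end ConstantSpeed

section Dimension

variable {E : Type*} [NormedAddCommGroup E]

theorem LipschitzOnWith.dimH_image_sub_image_le_two {g : ℝ → E} {A : Set ℝ} {C : NNReal}
    (hg : LipschitzOnWith C g A) : dimH (g '' A - g '' A) ≤ 2 := by
  have hlip : LipschitzOnWith _ (fun p : ℝ × ℝ => g p.1 - g p.2) (A ×ˢ A) :=
    (hg.comp LipschitzWith.prod_fst.lipschitzOnWith fun _ hp => hp.1).sub
      (hg.comp LipschitzWith.prod_snd.lipschitzOnWith fun _ hp => hp.2)
  rw [← image2_sub, image2_image_left, image2_image_right, ← image_prod]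
  calc _ ≤ dimH (A ×ˢ A) := hlip.dimH_image_le
    _ ≤ dimH (univ : Set (ℝ × ℝ)) := dimH_mono (subset_univ _)
    _ = 2 := by rw [Real.dimH_univ_eq_finrank]; simp

theorem LocallyBoundedVariationOn.dimH_image_sub_image_le_two {f : ℝ → E} {s : Set ℝ}
    (hf : LocallyBoundedVariationOn f s) : dimH (f '' s - f '' s) ≤ 2 := by
  rcases s.eq_empty_or_nonempty with rfl | ⟨a, ha⟩
  · simp
  rw [← image_naturalParameterization hf ha]
  exact (lipschitzOnWith_naturalParameterization hf ha).dimH_image_sub_image_le_two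

end Dimension

section Perturbation

variable {E F : Type*} [NormedAddCommGroup E] [NormedSpace ℝ E]
  [NormedAddCommGroup F] [NormedSpace ℝ F]

theorem dimH_image_neg_inv_smul_le [SecondCountableTopology E] (P : E →L[ℝ] F)
    (π : StrongDual ℝ E) (S : Set E) :
    dimH ((fun z => -(π z)⁻¹ • P z) '' (S ∩ {z | π z ≠ 0})) ≤ dimH S := by
  refine (dimH_image_le_of_locally_lipschitzOn fun z hz => ?_).trans (dimH_mono inter_subset_left)
  have hsmooth : ContDiffAt ℝ 1 (fun z => -(π z)⁻¹ • P z) z :=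
    ((π.contDiff.contDiffAt.inv hz.2).neg).smul P.contDiff.contDiffAt
  obtain ⟨C, t, ht, hC⟩ := hsmooth.exists_lipschitzOnWith
  exact ⟨C, t, nhdsWithin_le_nhds ht, hC⟩

theorem injOn_add_smulRight_of_notMem {P : E →L[ℝ] F} {π : StrongDual ℝ E}
    (hker : ∀ z, P z = 0 → π z = 0 → z = 0) {K : Set E} {v : F}
    (hv : v ∉ (fun z => -(π z)⁻¹ • P z) '' ((K - K) ∩ {z | π z ≠ 0})) :
    InjOn (P + π.smulRight v) K := by
  intro x hx y hy hxy
  have hz : P (x - y) + π (x - y) • v = 0 := by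
    simpa using (map_sub (P + π.smulRight v) x y).trans (sub_eq_zero.2 hxy)
  rw [← sub_eq_zero]
  by_cases h0 : π (x - y) = 0
  · exact hker _ (by simpa [h0] using hz) h0
  · refine absurd ⟨x - y, ⟨sub_mem_sub hx hy, h0⟩, ?_⟩ hv
    dsimp only
    rw [eq_neg_of_add_eq_zero_left hz, neg_smul, smul_neg, neg_neg, smul_smul, inv_mul_cancel₀ h0,
      one_smul]

theorem exists_norm_lt_injOn_add_smulRight [SecondCountableTopology E] [FiniteDimensional ℝ F]
    {P : E →L[ℝ] F} {π : StrongDual ℝ E} (hker : ∀ z, P z = 0 → π z = 0 → z = 0) {K : Set E}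
    (hK : dimH (K - K) < finrank ℝ F) {δ : ℝ} (hδ : 0 < δ) :
    ∃ v : F, ‖v‖ < δ ∧ InjOn (P + π.smulRight v) K := by
  have hdense :=
    dense_compl_of_dimH_lt_finrank ((dimH_image_neg_inv_smul_le P π (K - K)).trans_lt hK)
  obtain ⟨v, hv, hvδ⟩ := hdense.exists_mem_open Metric.isOpen_ball ⟨0, Metric.mem_ball_self hδ⟩
  exact ⟨v, mem_ball_zero_iff.1 hvδ, injOn_add_smulRight_of_notMem hker hv⟩

end Perturbation

theorem eq_zero_of_map_eq_zero_of_apply_zero {n : ℕ} (hn : 0 < n)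
    {P : EuclideanSpace ℝ (Fin n) →L[ℝ] EuclideanSpace ℝ (Fin (n - 1))}
    (hP : ∀ (z : EuclideanSpace ℝ (Fin n)) (i : Fin (n - 1)),
      P z i = z ⟨(i : ℕ) + 1, Nat.add_lt_of_lt_sub i.isLt⟩)
    {z : EuclideanSpace ℝ (Fin n)} (hPz : P z = 0) (hz : z ⟨0, hn⟩ = 0) : z = 0 := by
  ext ⟨i, hi⟩
  cases i with
  | zero => exact hz
  | succ i => simpa [hPz] using (hP z ⟨i, by omega⟩).symm

theorem norm_euclideanSpace_proj_le {ι : Type*} [Fintype ι] (i : ι) :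
    ‖EuclideanSpace.proj (𝕜 := ℝ) i‖ ≤ 1 :=
  ContinuousLinearMap.opNorm_le_bound _ zero_le_one fun z => by
    simpa using PiLp.norm_apply_le z i

theorem exists_norm_sub_lt_injOn_image {n : ℕ} (hn : 4 ≤ n)
    {P : EuclideanSpace ℝ (Fin n) →L[ℝ] EuclideanSpace ℝ (Fin (n - 1))}
    (hP : ∀ (z : EuclideanSpace ℝ (Fin n)) (i : Fin (n - 1)),
      P z i = z ⟨(i : ℕ) + 1, Nat.add_lt_of_lt_sub i.isLt⟩)
    {γ : ℝ → EuclideanSpace ℝ (Fin n)} {s : Set ℝ} (hγ : LocallyBoundedVariationOn γ s)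
    {ε : ℝ} (hε : 0 < ε) :
    ∃ T : EuclideanSpace ℝ (Fin n) →L[ℝ] EuclideanSpace ℝ (Fin (n - 1)),
      ‖T - P‖ < ε ∧ InjOn T (γ '' s) := by
  have hn0 : 0 < n := by omega
  set π := EuclideanSpace.proj (𝕜 := ℝ) (⟨0, hn0⟩ : Fin n)
  have hK : dimH (γ '' s - γ '' s) < finrank ℝ (EuclideanSpace ℝ (Fin (n - 1))) := by
    rw [finrank_euclideanSpace_fin]
    exact hγ.dimH_image_sub_image_le_two.trans_lt (by exact_mod_cast (by omega : 2 < n - 1))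
  obtain ⟨v, hv, hinj⟩ := exists_norm_lt_injOn_add_smulRight (π := π)
    (fun z => eq_zero_of_map_eq_zero_of_apply_zero hn0 hP) hK hε
  refine ⟨P + π.smulRight v, ?_, hinj⟩
  rw [add_sub_cancel_left, ContinuousLinearMap.norm_smulRight_apply]
  calc ‖π‖ * ‖v‖ ≤ 1 * ‖v‖ := by gcongr; exact norm_euclideanSpace_proj_le _
    _ < ε := by rwa [one_mul]

/-- Let `J` be a closed interval or a circle (the latter modeled by `2π`-periodic maps on `ℝ`,
injective on a period), and let `γ : J → ℝⁿ`, `n ≥ 4`, be an injective continuous map of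
bounded variation.  If `P : ℝⁿ → ℝⁿ⁻¹` is the projection onto the last `n-1` coordinates,
then for every `ε > 0` there is a linear map `T` with `‖T - P‖ < ε` such that `T ∘ γ` is
injective. -/
theorem stmt_6 {n : ℕ} (hn : 4 ≤ n)
    (P : EuclideanSpace ℝ (Fin n) →L[ℝ] EuclideanSpace ℝ (Fin (n - 1)))
    (hP : ∀ (z : EuclideanSpace ℝ (Fin n)) (i : Fin (n - 1)),
      P z i = z ⟨(i : ℕ) + 1, by have := i.isLt; omega⟩) :
    (∀ (a b : ℝ) (γ : ℝ → EuclideanSpace ℝ (Fin n)),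
      ContinuousOn γ (Icc a b) → BoundedVariationOn γ (Icc a b) →
      InjOn γ (Icc a b) → ∀ ε > (0 : ℝ),
      ∃ T : EuclideanSpace ℝ (Fin n) →L[ℝ] EuclideanSpace ℝ (Fin (n - 1)),
        ‖T - P‖ < ε ∧ InjOn (fun t => T (γ t)) (Icc a b))
    ∧
    (∀ γ : ℝ → EuclideanSpace ℝ (Fin n), Continuous γ →
      (∀ t, γ (t + 2 * Real.pi) = γ t) →
      BoundedVariationOn γ (Icc 0 (2 * Real.pi)) →
      InjOn γ (Ico 0 (2 * Real.pi)) → ∀ ε > (0 : ℝ),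
      ∃ T : EuclideanSpace ℝ (Fin n) →L[ℝ] EuclideanSpace ℝ (Fin (n - 1)),
        ‖T - P‖ < ε ∧ InjOn (fun t => T (γ t)) (Ico 0 (2 * Real.pi))) := by
  refine ⟨fun a b γ _ hγ hinj ε hε => ?_, fun γ _ _ hγ hinj ε hε => ?_⟩
  · obtain ⟨T, hT, hTinj⟩ := exists_norm_sub_lt_injOn_image hn hP hγ.locallyBoundedVariationOn hε
    exact ⟨T, hT, hTinj.comp hinj (mapsTo_image γ _)⟩
  · obtain ⟨T, hT, hTinj⟩ := exists_norm_sub_lt_injOn_image hn hP hγ.locallyBoundedVariationOn hε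
    exact ⟨T, hT, hTinj.comp hinj fun t ht => mem_image_of_mem γ (Ico_subset_Icc_self ht)⟩
end

section
/- Let γ : J → ℝⁿ be a continuous map of bounded variation on a closed interval or circle J, with total variation l. Then for every ε > 0 the compact product set γ(J) × γ(J) ⊆ ℝ²ⁿ can be covered by finitely many sets each of diameter less than ε, the sum of whose squared diameters is at most 2l². -/
open Set

namespace Stmt7Aux

variable {E : Type*} [PseudoMetricSpace E]


lemma right_small {γ : ℝ → E} {a b : ℝ}
    (hγ : ContinuousOn γ (Icc a b)) (hfin : eVariationOn γ (Icc a b) ≠ ⊤)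
    {x : ℝ} (hx : x ∈ Icc a b) (hxb : x < b) {ε : ℝ} (hε : 0 < ε) :
    ∃ y, x < y ∧ y ≤ b ∧ eVariationOn γ (Icc a b ∩ Icc x y) < ENNReal.ofReal ε := by
  obtain ⟨η, hη, hcont⟩ := Metric.continuousWithinAt_iff.mp (hγ x hx) (ε/4) (by linarith)
  set m := min b (x + η/2) with hm
  have hxm : x < m := lt_min hxb (by linarith)
  have hmb : m ≤ b := min_le_left _ _
  have hdist : ∀ w ∈ Icc a b ∩ Icc x m, edist (γ x) (γ w) ≤ ENNReal.ofReal (ε/4) := by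
    rintro w ⟨hw1, hw2⟩
    have hwx : dist w x < η := by
      rw [Real.dist_eq, abs_of_nonneg (by linarith [hw2.1])]
      have := hw2.2.trans (min_le_right b (x + η/2))
      linarith
    have := hcont hw1 hwx
    rw [edist_comm, edist_dist]
    exact ENNReal.ofReal_le_ofReal (by linarith)
  set W := eVariationOn γ (Icc a b ∩ Icc x m) with hWdef
  have hWfin : W ≠ ⊤ := ne_top_of_le_ne_top hfin (eVariationOn.mono γ inter_subset_left)
  by_cases hc : W ≤ ENNReal.ofReal (ε/2)
  · exact ⟨m, hxm, hmb, hc.trans_lt ((ENNReal.ofReal_lt_ofReal_iff hε).mpr (by linarith))⟩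
  push_neg at hc
  have hW0 : W ≠ 0 := (lt_trans (ENNReal.ofReal_pos.mpr (by linarith)) hc).ne'
  have hsub : W - ENNReal.ofReal (ε/2) < W :=
    ENNReal.sub_lt_self hWfin hW0 (ENNReal.ofReal_pos.mpr (by linarith)).ne'
  obtain ⟨⟨N, u, hu, us⟩, hlt⟩ :
      ∃ p : ℕ × { u : ℕ → ℝ // Monotone u ∧ ∀ i, u i ∈ Icc a b ∩ Icc x m },
        W - ENNReal.ofReal (ε/2) <
          ∑ i ∈ Finset.range p.1, edist (γ ((p.2 : ℕ → ℝ) (i + 1))) (γ ((p.2 : ℕ → ℝ) i)) :=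
    lt_iSup_iff.mp hsub
  dsimp only at hlt
  by_cases hall : ∀ i, i ≤ N → u i = x
  · exfalso
    have hsum : ∑ i ∈ Finset.range N, edist (γ (u (i+1))) (γ (u i)) = 0 :=
      Finset.sum_eq_zero fun i hi => by
        have hiN := Finset.mem_range.mp hi
        rw [hall i (by omega), hall (i+1) (by omega), edist_self]
    rw [hsum] at hlt
    exact lt_asymm (tsub_pos_of_lt hc) hlt
  push_neg at hall
  obtain ⟨i₀, hi₀N, hi₀⟩ := hall
  have hex : ∃ i, u i ≠ x := ⟨i₀, hi₀⟩
  classical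
  set k := Nat.find hex with hkdef
  have hkN : k ≤ N := (Nat.find_min' hex hi₀).trans hi₀N
  have hk : u k ≠ x := Nat.find_spec hex
  have hk' : ∀ j, j < k → u j = x := fun j hj => by
    by_contra h
    exact (not_lt.mpr (Nat.find_min' hex h)) hj
  set y := u k with hydef
  have hyy : y ∈ Icc a b ∩ Icc x m := us k
  have hxy : x < y := lt_of_le_of_ne hyy.2.1 (Ne.symm hk)
  -- bound the head of the sum
  have h1 : ∑ i ∈ Finset.range k, edist (γ (u (i+1))) (γ (u i)) ≤ edist (γ x) (γ y) := by
    rcases Nat.eq_zero_or_pos k with hk0 | hk0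
    · simp [hk0]
    have hz : ∑ i ∈ Finset.range (k-1), edist (γ (u (i+1))) (γ (u i)) = 0 :=
      Finset.sum_eq_zero fun i hi => by
        have := Finset.mem_range.mp hi
        rw [hk' i (by omega), hk' (i+1) (by omega), edist_self]
    rw [show k = (k-1)+1 from by omega, Finset.sum_range_succ, hz, zero_add,
      hk' (k-1) (by omega), show k - 1 + 1 = k from by omega, edist_comm]
  -- bound the tail of the sum
  have h2 : ∑ i ∈ Finset.Ico k N, edist (γ (u (i+1))) (γ (u i)) ≤
      eVariationOn γ (Icc a b ∩ Icc y m) := by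
    rw [Finset.sum_Ico_eq_sum_range]
    have hv : Monotone fun j => u (k + j) := fun i j hij => hu (by omega)
    have hvs : ∀ j, u (k + j) ∈ Icc a b ∩ Icc y m := fun j =>
      ⟨(us (k+j)).1, ⟨hu (Nat.le_add_right k j), (us (k+j)).2.2⟩⟩
    exact eVariationOn.sum_le (f := γ) (n := N - k) hv hvs
  have hsplit : ∑ i ∈ Finset.range N, edist (γ (u (i+1))) (γ (u i)) =
      (∑ i ∈ Finset.range k, edist (γ (u (i+1))) (γ (u i))) +
        ∑ i ∈ Finset.Ico k N, edist (γ (u (i+1))) (γ (u i)) := by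
    rw [Finset.range_eq_Ico, ← Finset.sum_Ico_consecutive _ (Nat.zero_le k) hkN,
      ← Finset.range_eq_Ico]
  set T := eVariationOn γ (Icc a b ∩ Icc y m) with hTdef
  have hTfin : T ≠ ⊤ := ne_top_of_le_ne_top hfin (eVariationOn.mono γ inter_subset_left)
  have hWsplit : eVariationOn γ (Icc a b ∩ Icc x y) + T = W :=
    eVariationOn.Icc_add_Icc γ hxy.le hyy.2.2 hyy.1
  have hfinal : eVariationOn γ (Icc a b ∩ Icc x y) < ENNReal.ofReal ε := by
    have hWlt : W < (edist (γ x) (γ y) + T) + ENNReal.ofReal (ε/2) := by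
      have := (ENNReal.add_lt_add_iff_right (a := ENNReal.ofReal (ε/2)) ENNReal.ofReal_ne_top).mpr hlt
      rw [tsub_add_cancel_of_le hc.le] at this
      refine this.trans_le ?_
      gcongr
      calc ∑ i ∈ Finset.range N, edist (γ (u (i+1))) (γ (u i))
          = _ + _ := hsplit
        _ ≤ edist (γ x) (γ y) + T := add_le_add h1 h2
    rw [← hWsplit] at hWlt
    have hedist : edist (γ x) (γ y) ≤ ENNReal.ofReal (ε/4) :=
      hdist y hyy
    have : eVariationOn γ (Icc a b ∩ Icc x y) + T <
        (ENNReal.ofReal (ε/4) + ENNReal.ofReal (ε/2)) + T := by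
      refine hWlt.trans_le ?_
      calc (edist (γ x) (γ y) + T) + ENNReal.ofReal (ε/2)
          ≤ (ENNReal.ofReal (ε/4) + T) + ENNReal.ofReal (ε/2) := by gcongr
        _ = (ENNReal.ofReal (ε/4) + ENNReal.ofReal (ε/2)) + T := by ring
    have h3 := (ENNReal.add_lt_add_iff_right hTfin).mp this
    refine h3.trans_le ?_
    rw [← ENNReal.ofReal_add (by linarith) (by linarith)]
    exact ENNReal.ofReal_le_ofReal (by linarith)
  exact ⟨y, hxy, hyy.2.2.trans hmb, hfinal⟩

lemma left_small {γ : ℝ → E} {a b : ℝ}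
    (hγ : ContinuousOn γ (Icc a b)) (hfin : eVariationOn γ (Icc a b) ≠ ⊤)
    {x : ℝ} (hx : x ∈ Icc a b) (hax : a < x) {ε : ℝ} (hε : 0 < ε) :
    ∃ y, a ≤ y ∧ y < x ∧ eVariationOn γ (Icc a b ∩ Icc y x) < ENNReal.ofReal ε := by
  set φ : ℝ → ℝ := fun t => a + b - t with hφ
  have hφanti : ∀ s : Set ℝ, AntitoneOn φ s := fun s u _ w _ h => by
    simp only [φ]; linarith
  have hφinj : Function.Injective φ := fun u w h => by
    simp only [φ] at h; linarith
  have hφim : ∀ c d : ℝ, φ '' Icc c d = Icc (a + b - d) (a + b - c) := fun c d => by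
    simpa [φ] using Set.image_const_sub_Icc (a := a + b) (b := c) (c := d)
  have hφab : φ '' Icc a b = Icc a b := by
    rw [hφim]; congr 1 <;> ring
  have hcomp : ∀ c d : ℝ, eVariationOn (γ ∘ φ) (Icc a b ∩ Icc c d) =
      eVariationOn γ (Icc a b ∩ Icc (a + b - d) (a + b - c)) := fun c d => by
    rw [eVariationOn.comp_eq_of_antitoneOn γ φ (hφanti _), Set.image_inter hφinj, hφab, hφim]
  have hγ' : ContinuousOn (γ ∘ φ) (Icc a b) := by
    apply hγ.comp (Continuous.continuousOn (continuous_const.sub continuous_id))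
    intro t ht
    rw [← hφab]; exact mem_image_of_mem φ ht
  have hfin' : eVariationOn (γ ∘ φ) (Icc a b) ≠ ⊤ := by
    rw [eVariationOn.comp_eq_of_antitoneOn γ φ (hφanti _), hφab]; exact hfin
  have hx' : a + b - x ∈ Icc a b := ⟨by linarith [hx.2], by linarith [hx.1]⟩
  obtain ⟨y', hy1, hy2, hy3⟩ := right_small hγ' hfin' hx' (by linarith) hε
  refine ⟨a + b - y', by linarith, by linarith, ?_⟩
  rw [hcomp, show a + b - (a + b - x) = x from by ring] at hy3
  exact hy3


lemma sum_image_le {ι β : Type*} [DecidableEq β] (s : Finset ι) (f : ι → β) (g : β → ℝ)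
    (hg : ∀ b, 0 ≤ g b) : ∑ b ∈ s.image f, g b ≤ ∑ i ∈ s, g (f i) := by
  classical
  induction s using Finset.induction with
  | empty => simp
  | insert _ _ hnotmem ih =>
    rename_i a s
    rw [Finset.image_insert, Finset.sum_insert hnotmem]
    by_cases hmem : f a ∈ s.image f
    · rw [Finset.insert_eq_self.mpr hmem]
      calc ∑ b ∈ s.image f, g b ≤ ∑ i ∈ s, g (f i) := ih
        _ ≤ g (f a) + ∑ i ∈ s, g (f i) := le_add_of_nonneg_left (hg _)
    · rw [Finset.sum_insert hmem]
      exact add_le_add (le_refl _) ih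

lemma interval_case {γ : ℝ → E} {a b : ℝ} (hab : a ≤ b)
    (hγ : ContinuousOn γ (Icc a b)) {l : ℝ}
    (hvar : eVariationOn γ (Icc a b) = ENNReal.ofReal l) {ε : ℝ} (hε : 0 < ε) :
    ∃ 𝒜 : Finset (Set (E × E)),
      ((γ '' Icc a b) ×ˢ (γ '' Icc a b)) ⊆ ⋃₀ ↑𝒜 ∧
      (∀ A ∈ 𝒜, Bornology.IsBounded A ∧ Metric.diam A < ε) ∧
      (∑ A ∈ 𝒜, Metric.diam A ^ 2) ≤ 2 * l ^ 2 := by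
  classical
  have hKb : Bornology.IsBounded (γ '' Icc a b) := (isCompact_Icc.image_of_continuousOn hγ).isBounded
  rcases le_or_gt l 0 with hl | hl
  · -- variation zero: the image is a single point
    have h0 : eVariationOn γ (Icc a b) = 0 := by
      rw [hvar, ENNReal.ofReal_eq_zero.mpr hl]
    have hdist0 : ∀ p ∈ (γ '' Icc a b) ×ˢ (γ '' Icc a b),
        ∀ q ∈ (γ '' Icc a b) ×ˢ (γ '' Icc a b), dist p q ≤ 0 := by
      rintro ⟨p1, p2⟩ ⟨⟨u1, hu1, rfl⟩, u2, hu2, rfl⟩ ⟨q1, q2⟩ ⟨⟨w1, hw1, rfl⟩, w2, hw2, rfl⟩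
      have key : ∀ z ∈ Icc a b, ∀ w ∈ Icc a b, dist (γ z) (γ w) ≤ 0 := by
        intro z hz w hw
        rw [dist_edist, (eVariationOn.eq_zero_iff γ).mp h0 z hz w hw]
        simp
      rw [Prod.dist_eq]
      exact max_le (key u1 hu1 w1 hw1) (key u2 hu2 w2 hw2)
    have hdiam0 : Metric.diam ((γ '' Icc a b) ×ˢ (γ '' Icc a b)) = 0 :=
      le_antisymm (Metric.diam_le_of_forall_dist_le le_rfl hdist0) Metric.diam_nonneg
    refine ⟨{(γ '' Icc a b) ×ˢ (γ '' Icc a b)}, ?_, ?_, ?_⟩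
    · intro p hp
      exact ⟨_, by simp, hp⟩
    · intro A hA
      rw [Finset.mem_singleton.mp hA, hdiam0]; exact ⟨hKb.prod hKb, hε⟩
    · rw [Finset.sum_singleton, hdiam0]
      nlinarith [sq_nonneg l]
  -- main case : 0 < l
  have hfin : eVariationOn γ (Icc a b) ≠ ⊤ := by rw [hvar]; exact ENNReal.ofReal_ne_top
  have hab' : a < b := by
    rcases eq_or_lt_of_le hab with rfl | h
    · exfalso
      have : eVariationOn γ (Icc a a) = 0 := eVariationOn.subsingleton γ (by simp)
      rw [hvar, ENNReal.ofReal_eq_zero] at this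
      linarith
    · exact h
  set δ : ℝ := min (ε/2) (l/5) with hδdef
  have hδ : 0 < δ := lt_min (by linarith) (by linarith)
  have hδε : δ ≤ ε/2 := min_le_left _ _
  have hδl : δ ≤ l/5 := min_le_right _ _
  have ha_mem : a ∈ Icc a b := ⟨le_rfl, hab⟩
  have hb_mem : b ∈ Icc a b := ⟨hab, le_rfl⟩
  have hlbv : LocallyBoundedVariationOn γ (Icc a b) :=
    BoundedVariationOn.locallyBoundedVariationOn hfin
  set v : ℝ → ℝ := variationOnFromTo γ (Icc a b) a with hvdef
  have hva : v a = 0 := variationOnFromTo.self γ _ a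
  have hvb : v b = l := by
    rw [hvdef, variationOnFromTo.eq_of_le γ _ hab, Set.inter_self, hvar,
      ENNReal.toReal_ofReal hl.le]
  have hdiff : ∀ x ∈ Icc a b, ∀ w ∈ Icc a b, x ≤ w →
      v w - v x = (eVariationOn γ (Icc a b ∩ Icc x w)).toReal := by
    intro x hxx w hw hxw
    rw [hvdef, ← variationOnFromTo.add hlbv ha_mem hxx hw,
      variationOnFromTo.eq_of_le γ _ hxw]
    ring
  have hvmono : MonotoneOn v (Icc a b) := variationOnFromTo.monotoneOn hlbv ha_mem
  -- continuity of the variation function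
  have hcont : ContinuousOn v (Icc a b) := by
    intro x hxx
    rw [Metric.continuousWithinAt_iff]
    intro ε' hε'
    have habs : ∀ x' ∈ Icc a b, ∀ w ∈ Icc a b, x' ≤ w →
        eVariationOn γ (Icc a b ∩ Icc x' w) < ENNReal.ofReal ε' → |v w - v x'| < ε' := by
      intro x' hx' w hw hle hsmall
      rw [hdiff x' hx' w hw hle, abs_of_nonneg ENNReal.toReal_nonneg]
      exact ENNReal.toReal_lt_of_lt_ofReal hsmall
    obtain ⟨yr, hyr1, hyr2⟩ : ∃ yr, x < yr ∧ ∀ w ∈ Icc a b, x ≤ w → w ≤ yr →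
        |v w - v x| < ε' := by
      rcases eq_or_lt_of_le hxx.2 with rfl | hxb
      · exact ⟨x + 1, by linarith, fun w hw h1 h2 => by
          have : w = x := le_antisymm hw.2 h1
          simp [this, hε']⟩
      · obtain ⟨y, hy1, hy2, hy3⟩ := right_small hγ hfin hxx hxb hε'
        refine ⟨y, hy1, fun w hw h1 h2 => ?_⟩
        refine habs x hxx w hw h1 (lt_of_le_of_lt ?_ hy3)
        exact eVariationOn.mono γ (inter_subset_inter_right _ (Icc_subset_Icc_right h2))
    obtain ⟨yl, hyl1, hyl2⟩ : ∃ yl, yl < x ∧ ∀ w ∈ Icc a b, yl ≤ w → w ≤ x →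
        |v w - v x| < ε' := by
      rcases eq_or_lt_of_le hxx.1 with heq | hax
      · refine ⟨x - 1, by linarith, fun w hw h1 h2 => ?_⟩
        have : w = x := le_antisymm h2 (heq ▸ hw.1)
        simp [this, hε']
      · obtain ⟨y, hy1, hy2, hy3⟩ := left_small hγ hfin hxx hax hε'
        refine ⟨y, hy2, fun w hw h1 h2 => ?_⟩
        have := habs w hw x hxx h2 (lt_of_le_of_lt ?_ hy3)
        · rwa [abs_sub_comm] at this
        · exact eVariationOn.mono γ (inter_subset_inter_right _ (Icc_subset_Icc_left h1))
    refine ⟨min (yr - x) (x - yl), lt_min (by linarith) (by linarith), ?_⟩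
    intro w hw hwx
    rw [Real.dist_eq] at hwx
    rw [Real.dist_eq]
    rcases le_total x w with h | h
    · refine hyr2 w hw h ?_
      have := abs_lt.mp (hwx.trans_le (min_le_left _ _))
      linarith [this.2]
    · refine hyl2 w hw ?_ h
      have := abs_lt.mp (hwx.trans_le (min_le_right _ _))
      linarith [this.1]
  -- the partition
  set N : ℕ := ⌈l / δ⌉₊ with hNdef
  have hN1 : l ≤ N * δ := by
    have := Nat.le_ceil (l / δ)
    rwa [div_le_iff₀ hδ] at this
  have hN2 : (N : ℝ) * δ < l + δ := by
    have := Nat.ceil_lt_add_one (by positivity : (0:ℝ) ≤ l / δ)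
    calc (N : ℝ) * δ < (l / δ + 1) * δ := by gcongr
      _ = l + δ := by field_simp
  set c : ℕ → ℝ := fun i => min (i * δ) l with hcdef
  have hc0 : c 0 = 0 := by simp [hcdef, hl.le]
  have hcmono : Monotone c := fun i j hij => by
    simp only [hcdef]
    gcongr <;> exact_mod_cast hij
  have hcmem : ∀ i, c i ∈ Icc (0:ℝ) l := fun i =>
    ⟨le_min (by positivity) hl.le, min_le_right _ _⟩
  have hcsucc : ∀ i : ℕ, c (i+1) ≤ c i + δ := by
    intro i
    simp only [hcdef]
    push_cast
    calc min ((i + 1) * δ) l ≤ min ((i : ℝ) * δ + δ) (l + δ) := by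
          gcongr <;> [nlinarith; linarith]
      _ = min ((i : ℝ) * δ) l + δ := min_add_add_right _ _ _
  have hcN : ∀ i, N ≤ i → c i = l := fun i hi => by
    simp only [hcdef]
    refine min_eq_right (hN1.trans ?_)
    gcongr <;> exact_mod_cast hi
  set S : ℕ → Set ℝ := fun i => Icc a b ∩ v ⁻¹' (Ici (c i)) with hSdef
  have hSb : ∀ i, b ∈ S i := fun i => ⟨hb_mem, by simp [hvb, (hcmem i).2]⟩
  have hSclosed : ∀ i, IsClosed (S i) :=
    fun i => hcont.preimage_isClosed_of_isClosed isClosed_Icc isClosed_Ici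
  have hSbdd : ∀ i, BddBelow (S i) := fun i => (bddBelow_Icc : BddBelow (Icc a b)).mono
    inter_subset_left
  set t : ℕ → ℝ := fun i => sInf (S i) with htdef
  have htmem : ∀ i, t i ∈ S i := fun i => (hSclosed i).csInf_mem ⟨b, hSb i⟩ (hSbdd i)
  have htmono : Monotone t := fun i j hij => csInf_le_csInf (hSbdd i) ⟨b, hSb j⟩
    (fun z hz => ⟨hz.1, le_trans (hcmono hij) hz.2⟩)
  have htval : ∀ i, v (t i) = c i := by
    intro i
    refine le_antisymm ?_ (htmem i).2
    by_contra hgt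
    push_neg at hgt
    have htia : a < t i := by
      rcases eq_or_lt_of_le (htmem i).1.1 with h | h
      · exfalso
        rw [← h, hva] at hgt
        exact absurd (hcmem i).1 (not_le.mpr hgt)
      · exact h
    obtain ⟨δ'', hδ''pos, hδ''⟩ := Metric.continuousWithinAt_iff.mp
      (hcont (t i) (htmem i).1) (v (t i) - c i) (by linarith)
    set w : ℝ := max a (t i - δ''/2) with hwdef
    have hw_mem : w ∈ Icc a b := ⟨le_max_left _ _,
      max_le hab (by linarith [(htmem i).1.2])⟩
    have hwlt : w < t i := max_lt htia (by linarith)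
    have hwdist : dist w (t i) < δ'' := by
      rw [Real.dist_eq, abs_of_nonpos (by linarith)]
      have : t i - δ''/2 ≤ w := le_max_right _ _
      linarith
    have := hδ'' hw_mem hwdist
    rw [Real.dist_eq] at this
    have hvw : c i ≤ v w := by
      have := abs_lt.mp this
      linarith [this.1]
    exact absurd (csInf_le (hSbdd i) ⟨hw_mem, hvw⟩) (not_le.mpr hwlt)
  have hta : t 0 = a :=
    le_antisymm (csInf_le (hSbdd 0) ⟨ha_mem, by simp [hva, hc0]⟩) (htmem 0).1.1
  -- the endpoint sequence
  set q : ℕ → ℝ := fun i => if i ≤ N then t i else b with hqdef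
  have hq0 : q 0 = a := by simp [hqdef, hta]
  have hqmem : ∀ i, q i ∈ Icc a b := fun i => by
    simp only [hqdef]
    split
    · exact (htmem i).1
    · exact hb_mem
  have hqmono : Monotone q := by
    intro i j hij
    simp only [hqdef]
    split <;> split
    · exact htmono hij
    · exact (htmem i).1.2
    · omega
    · exact le_rfl
  have hqlast : ∀ i, N + 1 ≤ i → q i = b := fun i hi => by
    simp only [hqdef]; rw [if_neg (by omega)]
  have hvq : ∀ i, v (q i) = c i := by
    intro i
    simp only [hqdef]
    split
    · exact htval i
    · rw [hvb, hcN i (by omega)]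
  have hseg : ∀ i : ℕ, eVariationOn γ (Icc a b ∩ Icc (q i) (q (i+1))) ≤ ENNReal.ofReal δ := by
    intro i
    have h1 : q i ≤ q (i+1) := hqmono (Nat.le_succ i)
    have h2 : (eVariationOn γ (Icc a b ∩ Icc (q i) (q (i+1)))).toReal ≤ δ := by
      rw [← hdiff _ (hqmem i) _ (hqmem (i+1)) h1, hvq, hvq]
      linarith [hcsucc i]
    have h3 : eVariationOn γ (Icc a b ∩ Icc (q i) (q (i+1))) ≠ ⊤ :=
      ne_top_of_le_ne_top hfin (eVariationOn.mono γ inter_subset_left)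
    exact (ENNReal.le_ofReal_iff_toReal_le h3 hδ.le).mpr h2
  -- the covering sets
  set A : ℕ × ℕ → Set (E × E) := fun p =>
    (γ '' (Icc a b ∩ Icc (q p.1) (q (p.1+1)))) ×ˢ (γ '' (Icc a b ∩ Icc (q p.2) (q (p.2+1))))
    with hAdef
  have hdiamseg : ∀ i : ℕ, ∀ p ∈ γ '' (Icc a b ∩ Icc (q i) (q (i+1))),
      ∀ p' ∈ γ '' (Icc a b ∩ Icc (q i) (q (i+1))), dist p p' ≤ δ := by
    rintro i _ ⟨u1, hu1, rfl⟩ _ ⟨u2, hu2, rfl⟩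
    rw [dist_edist]
    exact ENNReal.toReal_le_of_le_ofReal hδ.le
      ((eVariationOn.edist_le γ hu1 hu2).trans (hseg i))
  have hdiamA : ∀ p : ℕ × ℕ, Metric.diam (A p) ≤ δ := by
    intro p
    refine Metric.diam_le_of_forall_dist_le hδ.le ?_
    rintro ⟨z1, z2⟩ ⟨hz1, hz2⟩ ⟨w1, w2⟩ ⟨hw1, hw2⟩
    rw [Prod.dist_eq]
    exact max_le (hdiamseg _ _ hz1 _ hw1) (hdiamseg _ _ hz2 _ hw2)
  have hfind : ∀ z ∈ Icc a b, ∃ i ≤ N, z ∈ Icc (q i) (q (i+1)) := by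
    intro z hz
    have hTne : ((Finset.range (N+2)).filter (fun i => q i ≤ z)).Nonempty :=
      ⟨0, Finset.mem_filter.mpr ⟨Finset.mem_range.mpr (by omega), by rw [hq0]; exact hz.1⟩⟩
    obtain ⟨hi₀r, hi₀q⟩ := Finset.mem_filter.mp (Finset.max'_mem _ hTne)
    have hi₀r' : ((Finset.range (N+2)).filter (fun i => q i ≤ z)).max' hTne < N + 2 :=
      Finset.mem_range.mp hi₀r
    set i₀ := ((Finset.range (N+2)).filter (fun i => q i ≤ z)).max' hTne with hi₀def
    rcases eq_or_lt_of_le (show i₀ ≤ N + 1 by omega) with heq | hlt'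
    · refine ⟨N, le_rfl, ⟨?_, ?_⟩⟩
      · have : q (N+1) ≤ z := heq ▸ hi₀q
        exact le_trans (hqmono (Nat.le_succ N)) this
      · rw [hqlast (N+1) le_rfl]; exact hz.2
    · refine ⟨i₀, by omega, hi₀q, ?_⟩
      by_contra hcon
      push_neg at hcon
      have hmem : i₀ + 1 ∈ (Finset.range (N+2)).filter (fun i => q i ≤ z) :=
        Finset.mem_filter.mpr ⟨Finset.mem_range.mpr (by omega), hcon.le⟩
      have := Finset.le_max' _ _ hmem
      omega
  refine ⟨(Finset.range (N+1) ×ˢ Finset.range (N+1)).image A, ?_, ?_, ?_⟩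
  · rintro ⟨z1, z2⟩ ⟨⟨u1, hu1, rfl⟩, u2, hu2, rfl⟩
    obtain ⟨i, hiN, hi⟩ := hfind u1 hu1
    obtain ⟨j, hjN, hj⟩ := hfind u2 hu2
    refine ⟨A (i, j), ?_, ⟨⟨u1, ⟨hu1, hi⟩, rfl⟩, ⟨u2, ⟨hu2, hj⟩, rfl⟩⟩⟩
    rw [Finset.mem_coe]
    exact Finset.mem_image.mpr ⟨(i, j), Finset.mem_product.mpr
      ⟨Finset.mem_range.mpr (by omega), Finset.mem_range.mpr (by omega)⟩, rfl⟩
  · intro B hB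
    obtain ⟨p, _, rfl⟩ := Finset.mem_image.mp hB
    refine ⟨(hKb.subset (image_mono inter_subset_left)).prod
      (hKb.subset (image_mono inter_subset_left)), ?_⟩
    calc Metric.diam (A p) ≤ δ := hdiamA p
      _ < ε := by linarith
  · calc ∑ B ∈ (Finset.range (N+1) ×ˢ Finset.range (N+1)).image A, Metric.diam B ^ 2
        ≤ ∑ p ∈ Finset.range (N+1) ×ˢ Finset.range (N+1), Metric.diam (A p) ^ 2 :=
          sum_image_le _ _ _ (fun B => by positivity)
      _ ≤ ∑ _p ∈ Finset.range (N+1) ×ˢ Finset.range (N+1), δ ^ 2 := by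
          refine Finset.sum_le_sum fun p _ => ?_
          have := hdiamA p
          have := Metric.diam_nonneg (s := A p)
          nlinarith
      _ = ((N+1) * (N+1) : ℕ) * δ ^ 2 := by
          rw [Finset.sum_const, Finset.card_product, Finset.card_range]
          push_cast; ring
      _ ≤ 2 * l ^ 2 := by
          push_cast
          nlinarith [hN1, hN2, hδl, hδ, hl, Nat.cast_nonneg (α := ℝ) N]
  

end Stmt7Aux

/-- Let `γ` be a continuous map of bounded variation, with total variation `l`, on a closed
interval or a circle (the latter modeled by `2π`-periodic maps on `ℝ`).  For every `ε > 0`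
the product set `γ(J) × γ(J)` can be covered by finitely many sets, each of diameter less
than `ε`, the sum of whose squared diameters is at most `2l²`. -/
theorem stmt_7 {n : ℕ} :
    (∀ (a b : ℝ), a ≤ b → ∀ γ : ℝ → EuclideanSpace ℝ (Fin n),
      ContinuousOn γ (Icc a b) → ∀ l : ℝ,
      eVariationOn γ (Icc a b) = ENNReal.ofReal l → ∀ ε > (0 : ℝ),
      ∃ 𝒜 : Finset (Set (EuclideanSpace ℝ (Fin n) × EuclideanSpace ℝ (Fin n))),
        ((γ '' Icc a b) ×ˢ (γ '' Icc a b)) ⊆ ⋃₀ ↑𝒜 ∧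
        (∀ A ∈ 𝒜, Bornology.IsBounded A ∧ Metric.diam A < ε) ∧
        (∑ A ∈ 𝒜, Metric.diam A ^ 2) ≤ 2 * l ^ 2)
    ∧
    (∀ γ : ℝ → EuclideanSpace ℝ (Fin n), Continuous γ →
      (∀ t, γ (t + 2 * Real.pi) = γ t) → ∀ l : ℝ,
      eVariationOn γ (Icc 0 (2 * Real.pi)) = ENNReal.ofReal l → ∀ ε > (0 : ℝ),
      ∃ 𝒜 : Finset (Set (EuclideanSpace ℝ (Fin n) × EuclideanSpace ℝ (Fin n))),
        ((γ '' Icc 0 (2 * Real.pi)) ×ˢ (γ '' Icc 0 (2 * Real.pi))) ⊆ ⋃₀ ↑𝒜 ∧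
        (∀ A ∈ 𝒜, Bornology.IsBounded A ∧ Metric.diam A < ε) ∧
        (∑ A ∈ 𝒜, Metric.diam A ^ 2) ≤ 2 * l ^ 2) := by
  constructor
  · intro a b hab γ hγ l hvar ε hε
    exact Stmt7Aux.interval_case hab hγ hvar hε
  · intro γ hγ _hper l hvar ε hε
    exact Stmt7Aux.interval_case (by positivity) hγ.continuousOn hvar hε
end

section
/- Let J be a closed interval. The set AC(J) of absolutely continuous functions J → ℝ is a closed subset of the space CBV(J) of continuous functions of bounded variation equipped with the total variation norm ‖F‖_bv = sup_J |F| + var F. -/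
/-!
Write `G = F - (F - G)`. On disjoint intervals the increments of `F - G` sum to at most its total
variation, since the intervals can be ordered and inserted into a single partition. Choosing `F`
absolutely continuous with `var (F - G) < ε / 2` therefore makes the sums of the increments of `G`
small as soon as those of `F` are.
-/

open Set Filter

/-- `F` is absolutely continuous on `[a,b]`. -/
def ACOn (F : ℝ → ℝ) (a b : ℝ) : Prop :=
  ∀ ε > (0 : ℝ), ∃ δ > (0 : ℝ), ∀ (m : ℕ) (u v : Fin m → ℝ),
    (∀ i, a ≤ u i ∧ u i ≤ v i ∧ v i ≤ b) →
    (Pairwise fun i j => Disjoint (Ioo (u i) (v i)) (Ioo (u j) (v j))) →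
    (∑ i, (v i - u i)) < δ → (∑ i, |F (v i) - F (u i)|) < ε

open scoped Topology

namespace eVariationOn

variable {α E ι : Type*} [LinearOrder α]

theorem sub_le [SeminormedAddCommGroup E] (f g : α → E) (s : Set α) :
    eVariationOn (fun t => f t - g t) s ≤ eVariationOn f s + eVariationOn g s := by
  refine iSup_le fun ⟨n, u, hu, us⟩ => ?_
  calc ∑ i ∈ Finset.range n, edist (f (u (i + 1)) - g (u (i + 1))) (f (u i) - g (u i))
      ≤ ∑ i ∈ Finset.range n,
          (edist (f (u (i + 1))) (f (u i)) + edist (g (u (i + 1))) (g (u i))) := by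
        refine Finset.sum_le_sum fun i _ => ?_
        simpa only [sub_eq_add_neg, edist_neg_neg] using
          edist_add_add_le (f (u (i + 1))) (-g (u (i + 1))) (f (u i)) (-g (u i))
    _ ≤ eVariationOn f s + eVariationOn g s := by
        rw [Finset.sum_add_distrib]
        exact add_le_add (sum_le hu us) (sum_le hu us)

theorem sum_edist_le_of_pairwise_disjoint_Ioo [DenselyOrdered α] [PseudoEMetricSpace E]
    (f : α → E) (s : Set α) (I : Finset ι) (u v : ι → α) (huv : ∀ i ∈ I, u i ≤ v i)
    (hu : ∀ i ∈ I, u i ∈ s) (hv : ∀ i ∈ I, v i ∈ s)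
    (hI : (I : Set ι).Pairwise fun i j => Disjoint (Ioo (u i) (v i)) (Ioo (u j) (v j))) :
    ∑ i ∈ I, edist (f (v i)) (f (u i)) ≤ eVariationOn f s := by
  classical
  induction I using Finset.induction_on_max_value u generalizing s with
  | empty => simp
  | insert i I hiI hmax ih =>
    have hI' : (I : Set ι).Pairwise _ := hI.mono (by simp)
    rw [Finset.sum_insert hiI]
    rcases (huv i (I.mem_insert_self i)).eq_or_lt with hdeg | hlt
    · simpa [hdeg] using ih s (fun j hj => huv j (by simp [hj])) (fun j hj => hu j (by simp [hj]))
        (fun j hj => hv j (by simp [hj])) hI'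
    -- every other interval ends before `u i`, so the variation splits at `u i`
    have hleft : ∀ j ∈ I, v j ≤ u i := by
      intro j hj
      have hdisj : Disjoint (Ioo (u i) (v i)) (Ioo (u j) (v j)) :=
        hI (by simp) (by simp [hj]) (ne_of_mem_of_not_mem hj hiI).symm
      rw [Ioo_disjoint_Ioo, max_eq_left (hmax j hj)] at hdisj
      exact (min_le_iff.mp hdisj).resolve_left hlt.not_ge
    calc edist (f (v i)) (f (u i)) + ∑ j ∈ I, edist (f (v j)) (f (u j))
        ≤ eVariationOn f (s ∩ Ici (u i)) + eVariationOn f (s ∩ Iic (u i)) := by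
          gcongr
          · exact edist_le f ⟨hv i (by simp), hlt.le⟩ ⟨hu i (by simp), le_rfl⟩
          · exact ih _ (fun j hj => huv j (by simp [hj]))
              (fun j hj => ⟨hu j (by simp [hj]), (huv j (by simp [hj])).trans (hleft j hj)⟩)
              (fun j hj => ⟨hv j (by simp [hj]), hleft j hj⟩) hI'
      _ ≤ eVariationOn f s := by
          rw [add_comm]
          refine (add_le_union f fun x hx y hy => hx.2.trans hy.2).trans (mono f ?_)
          exact union_subset inter_subset_left inter_subset_left

end eVariationOn

theorem ofReal_sum_abs_sub_le_eVariationOn (h : ℝ → ℝ) (s : Set ℝ) {m : ℕ} (u v : Fin m → ℝ)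
    (huv : ∀ i, u i ≤ v i) (hu : ∀ i, u i ∈ s) (hv : ∀ i, v i ∈ s)
    (hd : Pairwise fun i j => Disjoint (Ioo (u i) (v i)) (Ioo (u j) (v j))) :
    ENNReal.ofReal (∑ i, |h (v i) - h (u i)|) ≤ eVariationOn h s := by
  rw [ENNReal.ofReal_sum_of_nonneg fun i _ => abs_nonneg _]
  simp_rw [← Real.dist_eq, ← edist_dist]
  exact eVariationOn.sum_edist_le_of_pairwise_disjoint_Ioo h s Finset.univ u v (by simpa)
    (by simpa) (by simpa) (by simpa using hd.set_pairwise univ)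

theorem ACOn.of_tendsto_eVariationOn_sub {a b : ℝ} {F : ℕ → ℝ → ℝ} {G : ℝ → ℝ}
    (hF : ∀ k, ACOn (F k) a b)
    (hFG : Tendsto (fun k => eVariationOn (fun t => F k t - G t) (Icc a b)) atTop (𝓝 0)) :
    ACOn G a b := by
  intro ε hε
  obtain ⟨N, hN⟩ := (hFG.eventually (gt_mem_nhds (ENNReal.ofReal_pos.mpr (half_pos hε)))).exists
  obtain ⟨δ, hδ, hFN⟩ := hF N (ε / 2) (half_pos hε)
  refine ⟨δ, hδ, fun m u v huv hd hsum => ?_⟩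
  have hdiff : ∑ i, |(F N (v i) - G (v i)) - (F N (u i) - G (u i))| < ε / 2 :=
    (ENNReal.ofReal_lt_ofReal_iff (half_pos hε)).mp <|
      (ofReal_sum_abs_sub_le_eVariationOn _ (Icc a b) u v (fun i => (huv i).2.1)
        (fun i => ⟨(huv i).1, (huv i).2.1.trans (huv i).2.2⟩)
        (fun i => ⟨(huv i).1.trans (huv i).2.1, (huv i).2.2⟩) hd).trans_lt hN
  calc ∑ i, |G (v i) - G (u i)|
      ≤ ∑ i, (|F N (v i) - F N (u i)| + |(F N (v i) - G (v i)) - (F N (u i) - G (u i))|) := by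
        exact Finset.sum_le_sum fun i _ => (abs_sub _ _).trans_eq' (congrArg abs (by ring))
    _ < ε / 2 + ε / 2 := by
        rw [Finset.sum_add_distrib]
        exact add_lt_add (hFN m u v huv hd hsum) hdiff
    _ = ε := add_halves ε

theorem stmt_10_general (a b : ℝ) (F : ℕ → ℝ → ℝ) (G : ℝ → ℝ)
    (hFbv : ∀ k, BoundedVariationOn (F k) (Icc a b))
    (hFac : ∀ k, ACOn (F k) a b)
    (hGbv : BoundedVariationOn G (Icc a b))
    (hconv : Tendsto (fun k => (⨆ t : Icc a b, |F k t - G t|) +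
        (eVariationOn (fun t => F k t - G t) (Icc a b)).toReal) atTop (nhds 0)) :
    ACOn G a b := by
  have hfin : ∀ k, eVariationOn (fun t => F k t - G t) (Icc a b) ≠ ⊤ := fun k =>
    ne_top_of_le_ne_top (ENNReal.add_ne_top.mpr ⟨hFbv k, hGbv⟩) (eVariationOn.sub_le _ _ _)
  have hvar : Tendsto (fun k => (eVariationOn (fun t => F k t - G t) (Icc a b)).toReal)
      atTop (𝓝 0) :=
    squeeze_zero (fun _ => ENNReal.toReal_nonneg)
      (fun k => le_add_of_nonneg_left (Real.iSup_nonneg fun _ => abs_nonneg _)) hconv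
  exact ACOn.of_tendsto_eVariationOn_sub hFac
    ((ENNReal.tendsto_toReal_iff hfin ENNReal.zero_ne_top).mp (by simpa using hvar))

/-- The absolutely continuous functions on a closed interval `J` form a closed subset of the
space of continuous functions of bounded variation on `J` with the total variation norm
(stated as sequential closedness). -/
theorem stmt_10 (a b : ℝ) (hab : a ≤ b) (F : ℕ → ℝ → ℝ) (G : ℝ → ℝ)
    (hFc : ∀ k, ContinuousOn (F k) (Icc a b))
    (hFbv : ∀ k, BoundedVariationOn (F k) (Icc a b))
    (hFac : ∀ k, ACOn (F k) a b)
    (hGc : ContinuousOn G (Icc a b)) (hGbv : BoundedVariationOn G (Icc a b))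
    (hconv : Tendsto (fun k => (⨆ t : Icc a b, |F k t - G t|) +
        (eVariationOn (fun t => F k t - G t) (Icc a b)).toReal) atTop (nhds 0)) :
    ACOn G a b :=
  stmt_10_general a b F G hFbv hFac hGbv hconv
end

section
/- Let a, b, c be three points in ℂⁿ not lying on a single complex line (more precisely, c is not on the complex line through a and b). Then the triangle boundary σ = [a,b] ∪ [b,c] ∪ [c,a] (the union of the three straight-line segments) is a polynomially convex compact subset of ℂⁿ. -/
open Set

/-- The polynomial hull of a set `X ⊆ ℂⁿ`. -/
def polyHull {n : ℕ} (X : Set (Fin n → ℂ)) : Set (Fin n → ℂ) :=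
  {z | ∀ P : MvPolynomial (Fin n) ℂ,
    ‖MvPolynomial.eval z P‖ ≤ sSup ((fun x => ‖MvPolynomial.eval x P‖) '' X)}

/-!
The complex affine plane `a + ℂ (b - a) + ℂ (c - a)` is cut out by affine, hence polynomial,
equations, so the hull of `σ` lies in it. In the affine coordinates of that plane, `σ` becomes
the boundary `T` of the standard triangle in `ℝ² ⊂ ℂ²`, which inside `[0, 1]²` is the zero set of
`x y (1 - x - y)`. A real interval `[s, t] ⊂ ℂ` is polynomially convex: a polynomial with values
in `[s, t]` on `σ` has real values on the hull by the exponential trick applied to `-(P - x)²`,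
and these lie in `[s, t]` by a linear bound. Applied to `x`, `y` and `x y (1 - x - y)`, this
confines the hull to `σ`.
-/

open MvPolynomial Complex

section PolyHull

variable {n : ℕ} {K : Set (Fin n → ℂ)} {z : Fin n → ℂ}

lemma subset_polyHull (hK : IsCompact K) : K ⊆ polyHull K := fun w hw P =>
  le_csSup (hK.image (continuous_norm.comp (continuous_eval P))).bddAbove ⟨w, hw, rfl⟩

lemma norm_eval_le_of_mem_polyHull (hz : z ∈ polyHull K) (P : MvPolynomial (Fin n) ℂ) {M : ℝ}
    (hM : ∀ w ∈ K, ‖eval w P‖ ≤ M) : ‖eval z P‖ ≤ M := by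
  rcases K.eq_empty_or_nonempty with rfl | hK
  · -- `polyHull ∅ = ∅`, since `sSup ∅ = 0` in `ℝ`
    exact absurd (hz 1) (by simp)
  · exact (hz P).trans (csSup_le (hK.image _) (forall_mem_image.2 hM))

/-- The polynomials `(1 + P / N) ^ N ≈ exp P` have modulus at most `1` on `K`. -/
lemma nonpos_of_mem_polyHull (hz : z ∈ polyHull K) {P : MvPolynomial (Fin n) ℂ} {m r : ℝ}
    (hP : MapsTo (eval · P) K (ofReal '' Icc (-m) 0)) (hr : eval z P = r) : r ≤ 0 := by
  by_contra! hr0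
  obtain ⟨N, hN⟩ := exists_nat_ge (max m 1)
  have hN0 : (0 : ℝ) < N := lt_of_lt_of_le one_pos ((le_max_right _ _).trans hN)
  have hQ : ∀ w, eval w ((1 + C (N : ℂ)⁻¹ * P) ^ N) = (1 + (N : ℂ)⁻¹ * eval w P) ^ N := by
    simp
  have hQ_real : ∀ y : ℝ, (1 + (N : ℂ)⁻¹ * y) ^ N = ((1 + y / N) ^ N : ℝ) := by
    intro y; push_cast; ring
  have hK : ∀ w ∈ K, ‖eval w ((1 + C (N : ℂ)⁻¹ * P) ^ N)‖ ≤ 1 := by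
    rintro w hw
    obtain ⟨x, ⟨hmx, hx0⟩, hx⟩ := hP hw
    have hx1 : 0 ≤ 1 + x / N := by
      rw [← neg_le_iff_add_nonneg', le_div_iff₀ hN0]
      nlinarith [le_max_left m 1]
    rw [hQ, ← show ((x : ℂ)) = eval w P from hx, hQ_real, norm_real,
      Real.norm_of_nonneg (by positivity)]
    exact pow_le_one₀ (by positivity) (by linarith [div_nonpos_of_nonpos_of_nonneg hx0 hN0.le])
  have := norm_eval_le_of_mem_polyHull hz _ hK
  rw [hQ, hr, hQ_real, norm_real, Real.norm_of_nonneg (by positivity)] at this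
  exact this.not_gt (one_lt_pow₀ (by linarith [div_pos hr0 hN0]) (by exact_mod_cast hN0.ne'))

lemma mapsTo_polyHull_of_mapsTo_Icc {P : MvPolynomial (Fin n) ℂ} {s t : ℝ}
    (hP : MapsTo (eval · P) K (ofReal '' Icc s t)) :
    MapsTo (eval · P) (polyHull K) (ofReal '' Icc s t) := by
  intro z hz
  set x := (eval z P).re
  set y := (eval z P).im
  -- `-(P - x)²` is real and `≤ 0` on `K`, and equals `y²` at `z`
  have hy : y ^ 2 ≤ 0 := by
    refine nonpos_of_mem_polyHull hz (P := -(P - C (x : ℂ)) ^ 2) (m := (|s| + |t| + |x|) ^ 2)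
      ?_ ?_
    · rintro w hw
      obtain ⟨x', ⟨hsx', hx't⟩, hx'⟩ := hP hw
      refine ⟨-(x' - x) ^ 2, ⟨?_, by nlinarith⟩, ?_⟩
      · have : |x' - x| ≤ |s| + |t| + |x| := by
          rw [abs_le]
          constructor <;> linarith [le_abs_self s, neg_abs_le s, le_abs_self t, neg_abs_le t,
            le_abs_self x, neg_abs_le x]
        rw [neg_le_neg_iff, ← sq_abs]
        exact pow_le_pow_left₀ (abs_nonneg _) this 2
      · simp [← show ((x' : ℂ)) = eval w P from hx']
    · have hdiff : eval z P - x = y * I := by apply Complex.ext <;> simp [x, y]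
      rw [eval_neg, eval_pow, eval_sub, eval_C, hdiff, mul_pow, I_sq]
      push_cast
      ring
  have hy0 : y = 0 := (pow_eq_zero_iff two_ne_zero).1 (le_antisymm hy (sq_nonneg y))
  have hzx : eval z P = x := Complex.ext (by simp [x]) (by simpa [x] using hy0)
  refine ⟨x, ?_, hzx.symm⟩
  have hmid := norm_eval_le_of_mem_polyHull hz (P - C (((s + t) / 2 : ℝ) : ℂ))
    (M := (t - s) / 2) fun w hw => by
      obtain ⟨x', hx'st, hx'⟩ := hP hw
      rw [eval_sub, eval_C, ← show ((x' : ℂ)) = eval w P from hx', ← ofReal_sub, norm_real,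
        Real.norm_eq_abs, abs_le]
      constructor <;> linarith [hx'st.1, hx'st.2]
  rw [eval_sub, eval_C, hzx, ← ofReal_sub, norm_real, Real.norm_eq_abs, abs_le] at hmid
  constructor <;> linarith [hmid.1, hmid.2]

lemma exists_eval_eq_affineMap (A : (Fin n → ℂ) →ᵃ[ℂ] ℂ) :
    ∃ P : MvPolynomial (Fin n) ℂ, ∀ w, eval w P = A w := by
  classical
  refine ⟨∑ i, C (A.linear fun j => if i = j then 1 else 0) * X i + C (A 0), fun w => ?_⟩
  rw [congrFun A.decomp w, Pi.add_apply, A.linear.pi_apply_eq_sum_univ w]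
  simp only [map_add, map_sum, map_mul, eval_C, eval_X, smul_eq_mul, mul_comm]

lemma AffineMap.eqOn_polyHull {ι : Type*} {A B : (Fin n → ℂ) →ᵃ[ℂ] (ι → ℂ)} (h : EqOn A B K) :
    EqOn A B (polyHull K) := by
  intro z hz
  funext i
  obtain ⟨P, hP⟩ := exists_eval_eq_affineMap ((LinearMap.proj i).toAffineMap.comp (A - B))
  have := norm_eval_le_of_mem_polyHull hz P (M := 0) fun w hw => by simp [hP, h hw]
  simpa [hP, sub_eq_zero] using this

end PolyHull

lemma isCompact_segment {E : Type*} [AddCommGroup E] [Module ℝ E] [TopologicalSpace E]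
    [IsTopologicalAddGroup E] [ContinuousSMul ℝ E] (x y : E) : IsCompact (segment ℝ x y) := by
  rw [← convexHull_pair (𝕜 := ℝ)]
  exact (toFinite _).isCompact_convexHull ℝ

/-- The boundary of the triangle with vertices `(0, 0)`, `(1, 0)`, `(0, 1)`: on `[0, 1]²` the
product vanishes exactly on its three edges. -/
def triangleBoundary : Set (ℝ × ℝ) :=
  {p | p.1 ∈ Icc 0 1 ∧ p.2 ∈ Icc 0 1 ∧ p.1 * p.2 * (1 - p.1 - p.2) = 0}

lemma mem_segment_union_iff {E : Type*} [AddCommGroup E] [Module ℝ E] {a b c w : E} :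
    w ∈ segment ℝ a b ∪ segment ℝ b c ∪ segment ℝ c a ↔
      ∃ p ∈ triangleBoundary, w = a + p.1 • (b - a) + p.2 • (c - a) := by
  simp only [segment_eq_image', mem_union, mem_image]
  constructor
  · rintro ((⟨θ, ⟨h0, h1⟩, rfl⟩ | ⟨θ, ⟨h0, h1⟩, rfl⟩) | ⟨θ, ⟨h0, h1⟩, rfl⟩)
    · exact ⟨(θ, 0), ⟨⟨h0, h1⟩, by simp, by ring⟩, by module⟩
    · exact ⟨(1 - θ, θ), ⟨⟨by linarith, by linarith⟩, ⟨h0, h1⟩, by ring⟩, by module⟩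
    · exact ⟨(0, 1 - θ), ⟨by simp, ⟨by linarith, by linarith⟩, by ring⟩, by module⟩
  · rintro ⟨⟨x, y⟩, ⟨hx, hy, hxy⟩, rfl⟩
    rcases mul_eq_zero.1 hxy with hxy | hxy
    · rcases mul_eq_zero.1 hxy with rfl | rfl
      · exact Or.inr ⟨1 - y, ⟨by linarith [hy.2], by linarith [hy.1]⟩, by module⟩
      · exact Or.inl (Or.inl ⟨x, hx, by module⟩)
    · obtain rfl : x = 1 - y := by linarith
      exact Or.inl (Or.inr ⟨y, hy, by module⟩)

lemma mapsTo_polyHull_of_mapsTo_triangleBoundary {n : ℕ} {K : Set (Fin n → ℂ)}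
    {A : (Fin n → ℂ) →ᵃ[ℂ] ℂ × ℂ} (h : MapsTo A K (Prod.map ofReal ofReal '' triangleBoundary)) :
    MapsTo A (polyHull K) (Prod.map ofReal ofReal '' triangleBoundary) := by
  obtain ⟨P₁, hP₁⟩ := exists_eval_eq_affineMap ((LinearMap.fst ℂ ℂ ℂ).toAffineMap.comp A)
  obtain ⟨P₂, hP₂⟩ := exists_eval_eq_affineMap ((LinearMap.snd ℂ ℂ ℂ).toAffineMap.comp A)
  simp only [AffineMap.coe_comp, LinearMap.coe_toAffineMap, Function.comp_apply,
    LinearMap.fst_apply, LinearMap.snd_apply] at hP₁ hP₂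
  have hK₁ : MapsTo (eval · P₁) K (ofReal '' Icc 0 1) := fun w hw => by
    obtain ⟨p, hp, hpw⟩ := h hw
    exact ⟨p.1, hp.1, by simp [hP₁, ← hpw]⟩
  have hK₂ : MapsTo (eval · P₂) K (ofReal '' Icc 0 1) := fun w hw => by
    obtain ⟨p, hp, hpw⟩ := h hw
    exact ⟨p.2, hp.2.1, by simp [hP₂, ← hpw]⟩
  have hK₃ : MapsTo (eval · (P₁ * P₂ * (1 - P₁ - P₂))) K (ofReal '' Icc 0 0) := fun w hw => by
    obtain ⟨p, hp, hpw⟩ := h hw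
    refine ⟨0, by simp, ?_⟩
    simp only [eval_mul, eval_sub, map_one, hP₁, hP₂, ← hpw, Prod.map_fst, Prod.map_snd]
    exact_mod_cast hp.2.2.symm
  intro z hz
  obtain ⟨x, hx, hxz⟩ := mapsTo_polyHull_of_mapsTo_Icc hK₁ hz
  obtain ⟨y, hy, hyz⟩ := mapsTo_polyHull_of_mapsTo_Icc hK₂ hz
  obtain ⟨e, he, hez⟩ := mapsTo_polyHull_of_mapsTo_Icc hK₃ hz
  obtain rfl : e = 0 := le_antisymm he.2 he.1
  simp only [eval_mul, eval_sub, map_one, ← hxz, ← hyz] at hez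
  refine ⟨(x, y), ⟨hx, hy, by exact_mod_cast hez.symm⟩, ?_⟩
  simp [Prod.ext_iff, ← hP₁, ← hP₂, hxz, hyz]

lemma ker_coprod_toSpanSingleton_sub_eq_bot {K V : Type*} [Field K] [AddCommGroup V]
    [Module K V] {a b c : V} (hab : a ≠ b) (hc : ∀ t : K, c ≠ a + t • (b - a)) :
    LinearMap.ker ((LinearMap.toSpanSingleton K V (b - a)).coprod
      (LinearMap.toSpanSingleton K V (c - a))) = ⊥ := by
  refine LinearMap.ker_eq_bot'.2 fun ⟨s, t⟩ h => ?_
  simp only [LinearMap.coprod_apply, LinearMap.toSpanSingleton_apply] at h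
  obtain rfl : t = 0 := by
    by_contra ht
    refine hc (t⁻¹ * -s) (eq_add_of_sub_eq' ?_)
    rw [mul_smul, neg_smul, ← eq_neg_of_add_eq_zero_right h, inv_smul_smul₀ ht]
  obtain rfl : s = 0 := by
    simpa [sub_eq_zero, hab.symm] using h
  rfl

/-- If `a`, `b`, `c` are points of `ℂⁿ` with `c` not on the complex line through `a` and
`b`, then the triangle boundary `σ = [a,b] ∪ [b,c] ∪ [c,a]` is a polynomially convex
compact subset of `ℂⁿ`. -/
theorem stmt_17 {n : ℕ} (a b c : Fin n → ℂ) (hab : a ≠ b)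
    (hc : ∀ t : ℂ, c ≠ a + t • (b - a)) :
    IsCompact (segment ℝ a b ∪ segment ℝ b c ∪ segment ℝ c a) ∧
    polyHull (segment ℝ a b ∪ segment ℝ b c ∪ segment ℝ c a)
      = segment ℝ a b ∪ segment ℝ b c ∪ segment ℝ c a := by
  set σ := segment ℝ a b ∪ segment ℝ b c ∪ segment ℝ c a
  have hσ : IsCompact σ :=
    ((isCompact_segment a b).union (isCompact_segment b c)).union (isCompact_segment c a)
  refine ⟨hσ, Subset.antisymm (fun z hz => ?_) (subset_polyHull hσ)⟩
  set f := (LinearMap.toSpanSingleton ℂ _ (b - a)).coprod (LinearMap.toSpanSingleton ℂ _ (c - a))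
  obtain ⟨g, hg⟩ :=
    f.exists_leftInverse_of_injective (ker_coprod_toSpanSingleton_sub_eq_bot hab hc)
  set A : (Fin n → ℂ) →ᵃ[ℂ] ℂ × ℂ := g.toAffineMap - AffineMap.const ℂ _ (g a)
  have hAf : ∀ q, A (a + f q) = q := fun q => by
    simp [A, ← LinearMap.comp_apply g f, hg]
  have hσf : ∀ w ∈ σ, ∃ p ∈ triangleBoundary, w = a + f (Prod.map ofReal ofReal p) := by
    intro w hw
    obtain ⟨p, hp, rfl⟩ := mem_segment_union_iff.1 hw
    exact ⟨p, hp, by simp [f, add_assoc]⟩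
  obtain ⟨p, hp, hAz⟩ := mapsTo_polyHull_of_mapsTo_triangleBoundary (K := σ) (A := A)
    (fun w hw => by obtain ⟨p, hp, rfl⟩ := hσf w hw; exact ⟨p, hp, (hAf _).symm⟩) hz
  have hz_eq := AffineMap.eqOn_polyHull (A := AffineMap.id ℂ _)
    (B := AffineMap.const ℂ _ a + f.toAffineMap.comp A)
    (fun w hw => by obtain ⟨p, hp, rfl⟩ := hσf w hw; simp [hAf]) hz
  refine mem_segment_union_iff.2 ⟨p, hp, ?_⟩
  simpa [← hAz, f, add_assoc] using hz_eq
end
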